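/- arXiv:2401.03668 — 2 statements merged into one kernel-verified Lean document; each statement's English description precedes it below -/
import Mathlib

section
/- For each integer n ≥ 0, the modified Bessel function satisfies lim_{x→∞} I_n(x) / (x^{-1/2} e^x) = 1/√(2π). -/
open Real Filter

noncomputable def besselI (n : ℕ) (x : ℝ) : ℝ :=
  (1 / Real.pi) * ∫ θ in (0:ℝ)..Real.pi, Real.exp (x * Real.cos θ) * Real.cos (n * θ)

open MeasureTheory Set Topology

/-! Substituting `θ = t / √x` turns `√x e⁻ˣ I_n(x)` into
`π⁻¹ ∫₀^{π√x} exp (x (cos (t/√x) - 1)) cos (n t/√x) dt`. Since `cos u = 1 - u²/2 + O(u⁴)`, the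
integrand tends to `exp (-t²/2)`, and Jordan's inequality `1 - cos u ≥ 2u²/π²` on `[-π, π]`
dominates it by `exp (-2t²/π²)`. Dominated convergence then gives the limit
`π⁻¹ ∫₀^∞ exp (-t²/2) dt = 1/√(2π)`. -/

theorem intervalIntegral_tendsto_integral_Ioi_of_dominated {ι E : Type*} [NormedAddCommGroup E]
    [NormedSpace ℝ E] {l : Filter ι} [l.IsCountablyGenerated] {F : ι → ℝ → E} {f : ℝ → E}
    {g : ℝ → ℝ} {a : ℝ} {b : ι → ℝ} (hb : Tendsto b l atTop)
    (hF_meas : ∀ᶠ i in l, AEStronglyMeasurable (F i) (volume.restrict (Ioi a)))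
    (h_bound : ∀ᶠ i in l, ∀ t ∈ Ioc a (b i), ‖F i t‖ ≤ g t) (hg : IntegrableOn g (Ioi a))
    (h_lim : ∀ t ∈ Ioi a, Tendsto (fun i => F i t) l (𝓝 (f t))) :
    Tendsto (fun i => ∫ t in a..b i, F i t) l (𝓝 (∫ t in Ioi a, f t)) := by
  have h_indicator : ∀ᶠ i in l,
      ∫ t in Ioi a, (Ioc a (b i)).indicator (F i) t = ∫ t in a..b i, F i t := by
    filter_upwards [hb.eventually_ge_atTop a] with i hi
    rw [intervalIntegral.integral_of_le hi, integral_indicator measurableSet_Ioc,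
      Measure.restrict_restrict measurableSet_Ioc, inter_eq_left.mpr Ioc_subset_Ioi_self]
  refine (tendsto_integral_filter_of_dominated_convergence (fun t => ‖g t‖) ?_ ?_ hg.norm ?_).congr'
    h_indicator
  · filter_upwards [hF_meas] with i hi using hi.indicator measurableSet_Ioc
  · filter_upwards [h_bound] with i hi
    refine ae_restrict_of_forall_mem measurableSet_Ioi fun t _ => ?_
    by_cases ht : t ∈ Ioc a (b i)
    · simpa [indicator_of_mem ht] using (hi t ht).trans (le_abs_self _)
    · simp [indicator_of_notMem ht]
  · refine ae_restrict_of_forall_mem measurableSet_Ioi fun t ht => (h_lim t ht).congr' ?_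
    filter_upwards [hb.eventually_ge_atTop t] with i hi
    exact (indicator_of_mem (show t ∈ Ioc a (b i) from ⟨ht, hi⟩) (F i)).symm

theorem tendsto_mul_cos_div_sqrt_sub_one (t : ℝ) :
    Tendsto (fun x => x * (cos (t / √x) - 1)) atTop (𝓝 (-(1 / 2) * t ^ 2)) := by
  have h_error : ∀ᶠ x in atTop,
      ‖x * (cos (t / √x) - 1) - -(1 / 2) * t ^ 2‖ ≤ 5 / 96 * t ^ 4 * x⁻¹ := by
    filter_upwards [eventually_gt_atTop 0, eventually_ge_atTop (t ^ 2)] with x hx hxt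
    have hu : |t / √x| ≤ 1 := by
      rw [abs_div, abs_of_pos (sqrt_pos.mpr hx), div_le_one (sqrt_pos.mpr hx)]
      exact abs_le_sqrt hxt
    have hu_sq : (t / √x) ^ 2 = t ^ 2 / x := by rw [div_pow, sq_sqrt hx.le]
    have hu_four : |t / √x| ^ 4 = t ^ 4 / x ^ 2 := by
      rw [show 4 = 2 * 2 by rfl, pow_mul, sq_abs, hu_sq]; ring
    have h_remainder : x * (cos (t / √x) - 1) - -(1 / 2) * t ^ 2 =
        x * (cos (t / √x) - (1 - (t / √x) ^ 2 / 2)) := by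
      rw [hu_sq]; field_simp; ring
    calc ‖x * (cos (t / √x) - 1) - -(1 / 2) * t ^ 2‖
        = x * |cos (t / √x) - (1 - (t / √x) ^ 2 / 2)| := by
          rw [h_remainder, norm_mul, norm_of_nonneg hx.le, Real.norm_eq_abs]
      _ ≤ x * (|t / √x| ^ 4 * (5 / 96)) := by gcongr; exact cos_bound hu
      _ = 5 / 96 * t ^ 4 * x⁻¹ := by rw [hu_four]; field_simp
  have h_decay : Tendsto (fun x : ℝ => 5 / 96 * t ^ 4 * x⁻¹) atTop (𝓝 0) := by
    simpa only [mul_zero] using (tendsto_inv_atTop_zero (𝕜 := ℝ)).const_mul (5 / 96 * t ^ 4)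
  exact tendsto_sub_nhds_zero_iff.mp (squeeze_zero_norm' h_error h_decay)

noncomputable def besselIRescaledIntegrand (n : ℕ) (x t : ℝ) : ℝ :=
  exp (x * (cos (t / √x) - 1)) * cos (n * (t / √x))

theorem besselI_div_rpow_mul_exp_eq_integral (n : ℕ) {x : ℝ} (hx : 0 < x) :
    besselI n x / (x ^ (-(1 / 2 : ℝ)) * exp x) =
      π⁻¹ * ∫ t in 0..π * √x, besselIRescaledIntegrand n x t := by
  have hsx : √x ≠ 0 := (sqrt_pos.mpr hx).ne'
  have h_subst : ∫ t in 0..π * √x, besselIRescaledIntegrand n x t =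
      √x * ∫ θ in 0..π, exp (x * (cos θ - 1)) * cos (n * θ) := by
    simpa only [besselIRescaledIntegrand, zero_div, mul_div_cancel_right₀ _ hsx, smul_eq_mul] using
      intervalIntegral.integral_comp_div (fun θ => exp (x * (cos θ - 1)) * cos (n * θ)) hsx
        (a := 0) (b := π * √x)
  have h_shift : ∫ θ in 0..π, exp (x * (cos θ - 1)) * cos (n * θ) =
      (∫ θ in 0..π, exp (x * cos θ) * cos (n * θ)) / exp x := by
    rw [← intervalIntegral.integral_div]
    congr with θ
    rw [mul_sub, mul_one, exp_sub]
    ring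
  rw [h_subst, h_shift, besselI, rpow_neg hx.le, ← sqrt_eq_rpow]
  field_simp

theorem norm_besselIRescaledIntegrand_le (n : ℕ) {x t : ℝ} (hx : 0 < x) (ht : |t| ≤ π * √x) :
    ‖besselIRescaledIntegrand n x t‖ ≤ exp (-(2 / π ^ 2) * t ^ 2) := by
  have hsx : 0 < √x := sqrt_pos.mpr hx
  have hu : |t / √x| ≤ π := by rwa [abs_div, abs_of_pos hsx, div_le_iff₀ hsx]
  have h_exponent : x * (cos (t / √x) - 1) ≤ -(2 / π ^ 2) * t ^ 2 := by
    have := mul_le_mul_of_nonneg_left (sub_le_sub_right (cos_le_one_sub_mul_cos_sq hu) 1) hx.le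
    rwa [div_pow, sq_sqrt hx.le, show x * (1 - 2 / π ^ 2 * (t ^ 2 / x) - 1) = -(2 / π ^ 2) * t ^ 2
      by field_simp; ring] at this
  rw [besselIRescaledIntegrand, norm_mul, norm_of_nonneg (exp_pos _).le]
  exact (mul_le_of_le_one_right (exp_pos _).le (abs_cos_le_one _)).trans (exp_le_exp.mpr h_exponent)

theorem tendsto_besselIRescaledIntegrand (n : ℕ) (t : ℝ) :
    Tendsto (fun x => besselIRescaledIntegrand n x t) atTop (𝓝 (exp (-(1 / 2) * t ^ 2))) := by
  have h_arg : Tendsto (fun x => n * (t / √x)) atTop (𝓝 0) := by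
    simpa only [mul_zero] using (tendsto_sqrt_atTop.const_div_atTop t).const_mul (n : ℝ)
  simpa only [besselIRescaledIntegrand, Function.comp_def, cos_zero, mul_one] using
    ((continuous_exp.tendsto _).comp (tendsto_mul_cos_div_sqrt_sub_one t)).mul
      ((continuous_cos.tendsto 0).comp h_arg)

theorem besselI_asymptotic (n : ℕ) :
    Tendsto (fun x : ℝ => besselI n x / (x ^ (-(1/2 : ℝ)) * Real.exp x)) atTop
      (nhds (1 / Real.sqrt (2 * Real.pi))) := by
  have h_integral : Tendsto (fun x => ∫ t in 0..π * √x, besselIRescaledIntegrand n x t) atTop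
      (𝓝 (∫ t in Ioi 0, exp (-(1 / 2) * t ^ 2))) :=
    intervalIntegral_tendsto_integral_Ioi_of_dominated
      (tendsto_sqrt_atTop.const_mul_atTop pi_pos)
      (Eventually.of_forall fun x => by unfold besselIRescaledIntegrand; fun_prop)
      (eventually_gt_atTop 0 |>.mono fun x hx t ht =>
        norm_besselIRescaledIntegrand_le n hx ((abs_of_pos ht.1).trans_le ht.2))
      (integrable_exp_neg_mul_sq (by positivity)).integrableOn
      (fun t _ => tendsto_besselIRescaledIntegrand n t)
  have h_const : π⁻¹ * (√(π / (1 / 2)) / 2) = 1 / √(2 * π) := by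
    rw [show π / (1 / 2) = 2 * π by ring]
    field_simp
    rw [sq_sqrt (by positivity)]
  rw [integral_gaussian_Ioi] at h_integral
  rw [← h_const]
  refine (h_integral.const_mul π⁻¹).congr' ?_
  filter_upwards [eventually_gt_atTop 0] with x hx
  exact (besselI_div_rpow_mul_exp_eq_integral n hx).symm
end

section
/- Under the power iteration setting with |σ₂| < |σ₁|, for all k ≥ 1, |q_k · u₁| ≥ 1 - (1/2)(σ₂/σ₁)^{2k} (1-α₁²)/α₁². -/
/-!
Writing `q₀ = ∑ αᵢ uᵢ`, the iterate `q_k` is the normalisation of `J^k q₀ = ∑ σᵢ^k αᵢ uᵢ`, so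
`|⟪q_k, u₁⟫| = |σ₁^k α₁| / ‖J^k q₀‖`. Bounding every `|σᵢ|`, `i ≠ 1`, by `|σ₂|` and using
`∑ αᵢ² = 1` gives `‖J^k q₀‖² ≤ (σ₁^k α₁)² (1 + x)` with `x = (σ₂/σ₁)^{2k} (1 - α₁²)/α₁²`,
and `(1 + x)^{-1/2} ≥ 1 - x/2` finishes the proof.
-/

open Finset
open scoped RealInnerProductSpace

lemma one_sub_half_sq_mul_one_add_le_one {x : ℝ} (hx : 0 ≤ x) (hx3 : x ≤ 3) :
    (1 - x / 2) ^ 2 * (1 + x) ≤ 1 := by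
  -- `1 - (1 - x/2)² (1 + x) = x² (3 - x) / 4`
  nlinarith [mul_nonneg (mul_nonneg hx hx) (by linarith : (0 : ℝ) ≤ 3 - x)]

/-- Bernoulli's inequality `(1 + x)^{-1/2} ≥ 1 - x/2`, stated without square roots. -/
lemma one_sub_half_le_abs_div_of_sq_le {a n x : ℝ} (hx : 0 ≤ x) (hn : 0 < n)
    (h : n ^ 2 ≤ a ^ 2 * (1 + x)) : 1 - x / 2 ≤ |a| / n := by
  rw [le_div_iff₀ hn]
  rcases le_or_gt (1 - x / 2) 0 with hneg | hpos
  · nlinarith [abs_nonneg a]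
  · refine le_of_pow_le_pow_left₀ two_ne_zero (abs_nonneg a) ?_
    calc ((1 - x / 2) * n) ^ 2 = (1 - x / 2) ^ 2 * n ^ 2 := by ring
      _ ≤ (1 - x / 2) ^ 2 * (a ^ 2 * (1 + x)) := by gcongr
      _ = (1 - x / 2) ^ 2 * (1 + x) * a ^ 2 := by ring
      _ ≤ 1 * a ^ 2 := by gcongr; exact one_sub_half_sq_mul_one_add_le_one hx (by linarith)
      _ = |a| ^ 2 := by rw [one_mul, sq_abs]

lemma sum_sq_pow_mul_le {ι : Type*} [Fintype ι] [DecidableEq ι] {σ : ι → ℝ} {i₀ : ι} {s : ℝ}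
    (hs : ∀ i ≠ i₀, |σ i| ≤ s) (c : ι → ℝ) (k : ℕ) :
    ∑ i, (σ i ^ k * c i) ^ 2 ≤ (σ i₀ ^ k * c i₀) ^ 2 + s ^ (2 * k) * (∑ i, c i ^ 2 - c i₀ ^ 2) := by
  rw [← add_sum_erase _ _ (mem_univ i₀), ← sum_erase_eq_sub (mem_univ i₀), mul_sum]
  gcongr with i hi
  calc (σ i ^ k * c i) ^ 2 = |σ i| ^ (2 * k) * c i ^ 2 := by
        rw [mul_pow, pow_mul, sq_abs, ← pow_mul, ← pow_mul, mul_comm 2 k]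
    _ ≤ s ^ (2 * k) * c i ^ 2 := by gcongr; exact hs i (ne_of_mem_erase hi)

/-- Once an iterate vanishes, both sides are `0` from then on, thanks to `0⁻¹ = 0`. -/
lemma eq_inv_norm_smul_iterate {E : Type*} [NormedAddCommGroup E]
    [NormedSpace ℝ E] {J : E → E} (hJ : ∀ (c : ℝ) x, J (c • x) = c • J x) {q : ℕ → E}
    (hq0 : ‖q 0‖ = 1) (hrec : ∀ k, q (k + 1) = ‖J (q k)‖⁻¹ • J (q k)) (k : ℕ) :
    q k = ‖J^[k] (q 0)‖⁻¹ • J^[k] (q 0) := by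
  induction k with
  | zero => rw [Function.iterate_zero_apply, hq0, inv_one, one_smul]
  | succ m ih =>
    rw [hrec, ih, Function.iterate_succ_apply']
    set w := J^[m] (q 0)
    by_cases hw : w = 0
    · have hJ0 : J 0 = 0 := by simpa using hJ 0 0
      simp [hw, hJ0]
    · rw [hJ, norm_smul, norm_inv, norm_norm, smul_smul, mul_inv, inv_inv, mul_right_comm,
        mul_inv_cancel₀ (norm_ne_zero_iff.mpr hw), one_mul]

section Diagonal

variable {ι E : Type*} [Fintype ι] [NormedAddCommGroup E] [InnerProductSpace ℝ E]
  {u : OrthonormalBasis ι ℝ E} {σ : ι → ℝ} {J : E → E}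

lemma inner_apply_of_diagonal (hJ : ∀ x, J x = ∑ i, (σ i * ⟪u i, x⟫) • u i) (i : ι) (x : E) :
    ⟪u i, J x⟫ = σ i * ⟪u i, x⟫ := by
  rw [hJ, u.orthonormal.inner_right_fintype]

lemma inner_iterate_of_diagonal (hJ : ∀ x, J x = ∑ i, (σ i * ⟪u i, x⟫) • u i) (i : ι) (k : ℕ)
    (x : E) : ⟪u i, J^[k] x⟫ = σ i ^ k * ⟪u i, x⟫ := by
  induction k with
  | zero => simp
  | succ m ih => rw [Function.iterate_succ_apply', inner_apply_of_diagonal hJ, ih, pow_succ']; ring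

lemma map_smul_of_diagonal (hJ : ∀ x, J x = ∑ i, (σ i * ⟪u i, x⟫) • u i) (c : ℝ) (x : E) :
    J (c • x) = c • J x := by
  simp only [hJ, smul_sum, inner_smul_right, smul_smul]
  congr! 2
  ring

end Diagonal

theorem power_iteration_overlap_lower {N : ℕ} (hN : 2 ≤ N)
    (σ : Fin N → ℝ)
    (hord : ∀ i j : Fin N, i ≤ j → |σ j| ≤ |σ i|)
    (hσ1 : σ ⟨0, by omega⟩ ≠ 0)
    (u : OrthonormalBasis (Fin N) ℝ (EuclideanSpace ℝ (Fin N)))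
    (J : EuclideanSpace ℝ (Fin N) → EuclideanSpace ℝ (Fin N))
    (hJ : ∀ x, J x = ∑ i, (σ i * ⟪u i, x⟫) • u i)
    (α : Fin N → ℝ) (q : ℕ → EuclideanSpace ℝ (Fin N))
    (hq0 : q 0 = ∑ i, α i • u i) (hnorm : ‖q 0‖ = 1)
    (hα1 : α ⟨0, by omega⟩ ≠ 0)
    (hrec : ∀ k : ℕ, q (k + 1) = ‖J (q k)‖⁻¹ • J (q k)) :
    ∀ k : ℕ, 1 ≤ k →
      |⟪q k, u ⟨0, by omega⟩⟫| ≥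
        1 - (1 / 2) * (σ ⟨1, by omega⟩ / σ ⟨0, by omega⟩) ^ (2 * k) *
            ((1 - α ⟨0, by omega⟩ ^ 2) / α ⟨0, by omega⟩ ^ 2) := by
  intro k _
  set i₀ : Fin N := ⟨0, by omega⟩
  set i₁ : Fin N := ⟨1, by omega⟩
  set w := J^[k] (q 0)
  have hw : ∀ i, ⟪u i, w⟫ = σ i ^ k * α i := fun i => by
    rw [inner_iterate_of_diagonal hJ, hq0, u.orthonormal.inner_right_fintype]
  have hα : ∑ i, α i ^ 2 = 1 := by
    have := u.sum_sq_inner_right (q 0)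
    rw [hnorm, one_pow] at this
    simpa only [hq0, u.orthonormal.inner_right_fintype] using this
  have hw_pos : 0 < ‖w‖ :=
    norm_pos_iff.mpr fun h => mul_ne_zero (pow_ne_zero k hσ1) hα1 (by rw [← hw, h, inner_zero_right])
  have hσ_le : ∀ i ≠ i₀, |σ i| ≤ |σ i₁| := fun i hi =>
    hord _ _ (Fin.le_def.mpr (Nat.one_le_iff_ne_zero.mpr fun h => hi (Fin.ext h)))
  set x := (σ i₁ / σ i₀) ^ (2 * k) * ((1 - α i₀ ^ 2) / α i₀ ^ 2) with hx_def
  have hx : 0 ≤ x := by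
    have : α i₀ ^ 2 ≤ 1 := by
      rw [← hα]; exact single_le_sum (fun i _ => sq_nonneg (α i)) (mem_univ i₀)
    exact mul_nonneg (by rw [pow_mul]; positivity) (div_nonneg (by linarith) (sq_nonneg _))
  have hw_sq : ‖w‖ ^ 2 ≤ (σ i₀ ^ k * α i₀) ^ 2 * (1 + x) := calc
    ‖w‖ ^ 2 = ∑ i, (σ i ^ k * α i) ^ 2 := by simp_rw [← u.sum_sq_inner_right, hw]
    _ ≤ (σ i₀ ^ k * α i₀) ^ 2 + |σ i₁| ^ (2 * k) * (∑ i, α i ^ 2 - α i₀ ^ 2) :=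
      sum_sq_pow_mul_le hσ_le α k
    _ = (σ i₀ ^ k * α i₀) ^ 2 * (1 + x) := by
      rw [hα, hx_def, div_pow, pow_mul |σ i₁|, sq_abs, ← pow_mul]; field_simp; ring
  have hoverlap : ⟪q k, u i₀⟫ = (σ i₀ ^ k * α i₀) / ‖w‖ := by
    rw [eq_inv_norm_smul_iterate (map_smul_of_diagonal hJ) hnorm hrec,
      real_inner_smul_left, real_inner_comm, hw, inv_mul_eq_div]
  rw [hoverlap, abs_div, abs_norm]
  linarith [one_sub_half_le_abs_div_of_sq_le hx hw_pos hw_sq]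
end
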